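/- arXiv:2106.01165 — 3 statements merged into one kernel-verified Lean document; each statement's English description precedes it below -/
import Mathlib

section
/- For any multiplier vector λ ∈ ℝ^T, the Lagrangian relaxation obtained by dualizing the coupling constraint Σ_a u_t^a = 1 provides an upper bound: the optimal value V_0(π_0) of the constrained Bayesian multi-armed bandit problem satisfies V_0(π_0) ≤ Σ_a V_0^a[λ](n_0^{B,a}, n_0^{G,a}) + Σ_{t=0}^{T-1} λ_t, where V_t^a[λ] are the per-arm Bellman value functions defined by the backward recursion V_T^a[λ] = 0 and V_t^a[λ](n^B, n^G) = max{ V_{t+1}^a[λ](n^B, n^G), -λ_t + (n^B/(n^B+n^G))(r_t^a(B) + V_{t+1}^a[λ](n^B+1, n^G)) + (n^G/(n^B+n^G))(r_t^a(G) + V_{t+1}^a[λ](n^B, n^G+1)) }. -/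
/-- Per-arm dual Bellman value function `V_t^a[λ]`, indexed by remaining fuel
`k = T - t`, current time `t`, and Beta-posterior counts `(n^B, n^G)`.
Outcomes: `false = B`, `true = G`. -/
noncomputable def Vdual (r : ℕ → Bool → ℝ) (lam : ℕ → ℝ) : ℕ → ℕ → ℕ → ℕ → ℝ
  | 0, _, _, _ => 0
  | k + 1, t, nB, nG =>
      max (Vdual r lam k (t + 1) nB nG)
        (-lam t
          + (nB : ℝ) / (nB + nG) * (r t false + Vdual r lam k (t + 1) (nB + 1) nG)
          + (nG : ℝ) / (nB + nG) * (r t true + Vdual r lam k (t + 1) nB (nG + 1)))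

/-- Optimal value of the constrained Bayesian multi-armed bandit, formulated as the
belief-MDP dynamic programming recursion over joint Beta-posterior states: at each
stage exactly one arm is selected, yielding the posterior-mean reward plus the
expected future value under the Bayesian transition kernel. -/
noncomputable def Wjoint {A : Type} [Fintype A] [DecidableEq A] [Nonempty A]
    (r : A → ℕ → Bool → ℝ) : ℕ → ℕ → (A → ℕ × ℕ) → ℝ
  | 0, _, _ => 0
  | k + 1, t, s =>
      Finset.univ.sup' Finset.univ_nonempty (fun a : A =>
        ((s a).1 : ℝ) / ((s a).1 + (s a).2) *
            (r a t false + Wjoint r k (t + 1) (Function.update s a ((s a).1 + 1, (s a).2)))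
        + ((s a).2 : ℝ) / ((s a).1 + (s a).2) *
            (r a t true + Wjoint r k (t + 1) (Function.update s a ((s a).1, (s a).2 + 1))))

theorem key_bound {A : Type} [Fintype A] [DecidableEq A] [Nonempty A]
    (r : A → ℕ → Bool → ℝ) (lam : ℕ → ℝ) :
    ∀ (k t : ℕ) (s : A → ℕ × ℕ), (∀ a : A, 1 ≤ (s a).1 ∧ 1 ≤ (s a).2) →
      Wjoint r k t s ≤ (∑ a : A, Vdual (r a) lam k t (s a).1 (s a).2)
        + ∑ j ∈ Finset.range k, lam (t + j)
  | 0, t, s, _ => by simp [Wjoint, Vdual]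
  | k + 1, t, s, hpos => by
    rw [Wjoint]
    apply Finset.sup'_le
    intro a _
    obtain ⟨hb1, hb2⟩ := hpos a
    set nB := (s a).1 with hnB
    set nG := (s a).2 with hnG
    have hden : (0:ℝ) < (nB:ℝ) + (nG:ℝ) := by
      have h1 : (1:ℝ) ≤ (nB:ℝ) := by exact_mod_cast hb1
      have h2 : (0:ℝ) ≤ (nG:ℝ) := Nat.cast_nonneg _
      linarith
    set p : ℝ := (nB:ℝ) / ((nB:ℝ) + (nG:ℝ)) with hp_def
    set q : ℝ := (nG:ℝ) / ((nB:ℝ) + (nG:ℝ)) with hq_def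
    have hpq : p + q = 1 := by
      rw [hp_def, hq_def]
      field_simp
    have hp : 0 ≤ p := by
      apply div_nonneg (Nat.cast_nonneg _) (le_of_lt hden)
    have hq : 0 ≤ q := by
      apply div_nonneg (Nat.cast_nonneg _) (le_of_lt hden)
    -- updated states are positive
    have hposF : ∀ b : A, 1 ≤ ((Function.update s a (nB + 1, nG)) b).1 ∧
        1 ≤ ((Function.update s a (nB + 1, nG)) b).2 := by
      intro b
      rcases eq_or_ne b a with h | h
      · subst h; simp [Function.update_self]; omega
      · rw [Function.update_of_ne h]; exact hpos b
    have hposG : ∀ b : A, 1 ≤ ((Function.update s a (nB, nG + 1)) b).1 ∧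
        1 ≤ ((Function.update s a (nB, nG + 1)) b).2 := by
      intro b
      rcases eq_or_ne b a with h | h
      · subst h; simp [Function.update_self]; omega
      · rw [Function.update_of_ne h]; exact hpos b
    have hF := key_bound r lam k (t + 1) (Function.update s a (nB + 1, nG)) hposF
    have hG := key_bound r lam k (t + 1) (Function.update s a (nB, nG + 1)) hposG
    set R : ℝ := ∑ b ∈ Finset.univ.erase a, Vdual (r b) lam k (t + 1) (s b).1 (s b).2 with hR
    set S : ℝ := ∑ j ∈ Finset.range k, lam (t + 1 + j) with hS
    have hsplitF : (∑ b : A, Vdual (r b) lam k (t + 1)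
          ((Function.update s a (nB + 1, nG)) b).1 ((Function.update s a (nB + 1, nG)) b).2)
        = Vdual (r a) lam k (t + 1) (nB + 1) nG + R := by
      rw [← Finset.add_sum_erase _ _ (Finset.mem_univ a)]
      congr 1
      · simp
      · apply Finset.sum_congr rfl
        intro b hb
        rw [Function.update_of_ne (Finset.ne_of_mem_erase hb)]
    have hsplitG : (∑ b : A, Vdual (r b) lam k (t + 1)
          ((Function.update s a (nB, nG + 1)) b).1 ((Function.update s a (nB, nG + 1)) b).2)
        = Vdual (r a) lam k (t + 1) nB (nG + 1) + R := by
      rw [← Finset.add_sum_erase _ _ (Finset.mem_univ a)]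
      congr 1
      · simp
      · apply Finset.sum_congr rfl
        intro b hb
        rw [Function.update_of_ne (Finset.ne_of_mem_erase hb)]
    set VF := Vdual (r a) lam k (t + 1) (nB + 1) nG with hVF
    set VG := Vdual (r a) lam k (t + 1) nB (nG + 1) with hVG
    have hLF : Wjoint r k (t + 1) (Function.update s a (nB + 1, nG)) ≤ VF + R + S := by
      rw [hsplitF] at hF; linarith
    have hLG : Wjoint r k (t + 1) (Function.update s a (nB, nG + 1)) ≤ VG + R + S := by
      rw [hsplitG] at hG; linarith
    -- right-hand side lower bounds
    have hrange : ∑ j ∈ Finset.range (k + 1), lam (t + j) = lam t + S := by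
      rw [Finset.sum_range_succ', add_comm]
      congr 1
      apply Finset.sum_congr rfl
      intro j _
      congr 1
      omega
    have hsplitV : (∑ b : A, Vdual (r b) lam (k + 1) t (s b).1 (s b).2)
        = Vdual (r a) lam (k + 1) t nB nG
          + ∑ b ∈ Finset.univ.erase a, Vdual (r b) lam (k + 1) t (s b).1 (s b).2 :=
      (Finset.add_sum_erase _ _ (Finset.mem_univ a)).symm
    have hRle : R ≤ ∑ b ∈ Finset.univ.erase a, Vdual (r b) lam (k + 1) t (s b).1 (s b).2 := by
      apply Finset.sum_le_sum
      intro b _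
      rw [Vdual]
      exact le_max_left _ _
    have hmax : -lam t + p * (r a t false + VF) + q * (r a t true + VG)
        ≤ Vdual (r a) lam (k + 1) t nB nG := by
      rw [Vdual]
      exact le_max_right _ _
    rw [hrange, hsplitV]
    have h1 : p * (r a t false + Wjoint r k (t + 1) (Function.update s a (nB + 1, nG)))
        ≤ p * (r a t false + (VF + R + S)) :=
      mul_le_mul_of_nonneg_left (by linarith) hp
    have h2 : q * (r a t true + Wjoint r k (t + 1) (Function.update s a (nB, nG + 1)))
        ≤ q * (r a t true + (VG + R + S)) :=
      mul_le_mul_of_nonneg_left (by linarith) hq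
    have hring : p * (r a t false + (VF + R + S)) + q * (r a t true + (VG + R + S))
        = p * (r a t false + VF) + q * (r a t true + VG) + (p + q) * (R + S) := by ring
    rw [hpq, one_mul] at hring
    linarith

/-- Lagrangian relaxation of the coupling constraint `∑ₐ uₜᵃ = 1` gives, for any
multiplier vector `λ ∈ ℝ^T`, the upper bound
`V₀(π₀) ≤ ∑ₐ V₀ᵃ[λ](n₀^{B,a}, n₀^{G,a}) + ∑_{t<T} λ_t`. -/
theorem dual_upper_bound {A : Type} [Fintype A] [DecidableEq A] [Nonempty A]
    (T : ℕ) (hT : 1 ≤ T) (r : A → ℕ → Bool → ℝ) (lam : ℕ → ℝ)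
    (s0 : A → ℕ × ℕ) (hpos : ∀ a : A, 1 ≤ (s0 a).1 ∧ 1 ≤ (s0 a).2) :
    Wjoint r T 0 s0 ≤
      (∑ a : A, Vdual (r a) lam T 0 (s0 a).1 (s0 a).2) + ∑ t ∈ Finset.range T, lam t := by
  have h := key_bound r lam T 0 s0 hpos
  simpa using h
end

section
/- With rewards r(B) = 0, r(G) = 1 (constant over time), the per-arm dual value function V_t[λ](n^B, n^G), viewed as a function of the state, is nondecreasing in n^G and nonincreasing in n^B along the probability: precisely, if n^G/(n^B+n^G) ≤ m^G/(m^B+m^G) and n^B + n^G = m^B + m^G, then V_t[λ](n^B, n^G) ≤ V_t[λ](m^B, m^G). -/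
/-- The posterior `(a + 1, b)` and its shift `(a, b + 1)` share the successor `(a + 1, b + 1)`,
whose value `Y` lies between the values `X` and `Z` of the two other successors. -/
lemma shifted_average_le {a b rB rG X Y Z : ℝ} (ha : 0 ≤ a) (hb : 0 ≤ b) (hr : rB ≤ rG)
    (hXY : X ≤ Y) (hYZ : Y ≤ Z) :
    (a + 1) / (a + b + 1) * (rB + X) + b / (a + b + 1) * (rG + Y) ≤
      a / (a + b + 1) * (rB + Y) + (b + 1) / (a + b + 1) * (rG + Z) := by
  simp only [div_mul_eq_mul_div, ← add_div]
  apply div_le_div_of_nonneg_right _ (by positivity)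
  nlinarith

section Monotone

variable {r : ℕ → Bool → ℝ} (hr : ∀ t, r t false ≤ r t true) (lam : ℕ → ℝ)
include hr

lemma Vdual_succ_left_le_succ_right (k t nB nG : ℕ) :
    Vdual r lam k t (nB + 1) nG ≤ Vdual r lam k t nB (nG + 1) := by
  induction k generalizing t nB nG with
  | zero => simp [Vdual]
  | succ k ih =>
    rw [Vdual, Vdual]
    refine max_le_max (ih _ _ _) ?_
    have hcont := shifted_average_le (Nat.cast_nonneg nB) (Nat.cast_nonneg nG) (hr t)
      (ih (t + 1) (nB + 1) nG) (ih (t + 1) nB (nG + 1))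
    push_cast
    rw [show (nB : ℝ) + 1 + nG = nB + nG + 1 by ring,
      show (nB : ℝ) + (nG + 1) = nB + nG + 1 by ring]
    linarith

lemma Vdual_add_left_le_add_right (k t nB nG d : ℕ) :
    Vdual r lam k t (nB + d) nG ≤ Vdual r lam k t nB (nG + d) := by
  induction d generalizing nB with
  | zero => rfl
  | succ d ih =>
    calc Vdual r lam k t (nB + (d + 1)) nG
        = Vdual r lam k t (nB + 1 + d) nG := by rw [add_comm d 1, add_assoc]
      _ ≤ Vdual r lam k t (nB + 1) (nG + d) := ih (nB + 1)
      _ ≤ Vdual r lam k t nB (nG + (d + 1)) := by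
        rw [← add_assoc]; exact Vdual_succ_left_le_succ_right hr lam k t nB (nG + d)

end Monotone

theorem Vdual_monotone_in_state_general (T : ℕ) (lam : ℕ → ℝ) (t : ℕ)
    (nB nG mB mG : ℕ)
    (hsum : nB + nG = mB + mG)
    (hprob : (nG : ℝ) / (nB + nG) ≤ (mG : ℝ) / (mB + mG)) :
    Vdual (fun _ b => if b then (1 : ℝ) else 0) lam (T - t) t nB nG ≤
      Vdual (fun _ b => if b then (1 : ℝ) else 0) lam (T - t) t mB mG := by
  have hle : nG ≤ mG := by
    rcases (nB + nG).eq_zero_or_pos with h0 | hpos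
    · omega
    · have hN : (0 : ℝ) < nB + nG := by exact_mod_cast hpos
      rw [show (mB : ℝ) + mG = nB + nG by exact_mod_cast hsum.symm] at hprob
      exact_mod_cast (div_le_div_iff_of_pos_right hN).mp hprob
  obtain ⟨d, rfl⟩ := Nat.exists_eq_add_of_le hle
  obtain rfl : nB = mB + d := by omega
  exact Vdual_add_left_le_add_right (fun _ => by norm_num) lam _ t mB nG d

/-- with rewards `r(B) = 0`, `r(G) = 1`, the per-arm dual value is
monotone along the posterior success probability: if `n^G/(n^B+n^G) ≤ m^G/(m^B+m^G)`
and `n^B + n^G = m^B + m^G`, then `V_t[λ](n^B,n^G) ≤ V_t[λ](m^B,m^G)`. -/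
theorem Vdual_monotone_in_state (T : ℕ) (hT : 1 ≤ T) (lam : ℕ → ℝ) (t : ℕ) (ht : t ≤ T)
    (nB nG mB mG : ℕ) (hnB : 1 ≤ nB) (hnG : 1 ≤ nG) (hmB : 1 ≤ mB) (hmG : 1 ≤ mG)
    (hsum : nB + nG = mB + mG)
    (hprob : (nG : ℝ) / (nB + nG) ≤ (mG : ℝ) / (mB + mG)) :
    Vdual (fun _ b => if b then (1 : ℝ) else 0) lam (T - t) t nB nG ≤
      Vdual (fun _ b => if b then (1 : ℝ) else 0) lam (T - t) t mB mG :=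
  Vdual_monotone_in_state_general T lam t nB nG mB mG hsum hprob
end

section
/- The value V_t^a[λ](n^B, n^G) is a 1-Lipschitz (in the ℓ¹ norm) function of λ restricted to coordinates (λ_t, ..., λ_{T-1}): |V_t^a[λ](n^B,n^G) - V_t^a[λ'](n^B,n^G)| ≤ Σ_{s=t}^{T-1} |λ_s - λ'_s|. -/
/-- The posterior weights sum to `1`, or to `0` when `nB = nG = 0` (as `0 / 0 = 0`). -/
lemma posterior_weights_add_le_one (nB nG : ℕ) :
    (nB : ℝ) / (nB + nG) + (nG : ℝ) / (nB + nG) ≤ 1 := by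
  rw [← add_div]
  exact div_self_le_one _

lemma abs_sub_le_of_subconvex_step {a a' p q x x' y y' S : ℝ} (hp : 0 ≤ p) (hq : 0 ≤ q)
    (hpq : p + q ≤ 1) (hS : 0 ≤ S) (hx : |x - x'| ≤ S) (hy : |y - y'| ≤ S) :
    |(-a + p * x + q * y) - (-a' + p * x' + q * y')| ≤ |a - a'| + S :=
  calc |(-a + p * x + q * y) - (-a' + p * x' + q * y')|
      = |(a' - a) + (p * (x - x') + q * (y - y'))| := by ring_nf
    _ ≤ |a' - a| + (p * |x - x'| + q * |y - y'|) := by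
        grw [abs_add_le, abs_add_le, abs_mul, abs_mul, abs_of_nonneg hp, abs_of_nonneg hq]
    _ ≤ |a - a'| + (p + q) * S := by
        rw [abs_sub_comm, add_mul]
        gcongr
    _ ≤ |a - a'| + S := by
        gcongr
        exact mul_le_of_le_one_left hS hpq

theorem abs_Vdual_sub_Vdual_le (r : ℕ → Bool → ℝ) (lam lam' : ℕ → ℝ) (k t nB nG : ℕ) :
    |Vdual r lam k t nB nG - Vdual r lam' k t nB nG| ≤
      ∑ s ∈ Finset.Ico t (t + k), |lam s - lam' s| := by
  induction k generalizing t nB nG with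
  | zero => simp [Vdual]
  | succ k ih =>
    set S := ∑ s ∈ Finset.Ico (t + 1) (t + 1 + k), |lam s - lam' s|
    have hS : 0 ≤ S := Finset.sum_nonneg fun _ _ ↦ abs_nonneg _
    have hsum : ∑ s ∈ Finset.Ico t (t + (k + 1)), |lam s - lam' s| = |lam t - lam' t| + S := by
      rw [← add_assoc, Finset.sum_eq_sum_Ico_succ_bot (by omega), add_right_comm]
    have ih_reward (b : Bool) (mB mG : ℕ) :
        |(r t b + Vdual r lam k (t + 1) mB mG) - (r t b + Vdual r lam' k (t + 1) mB mG)| ≤ S := by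
      rw [add_sub_add_left_eq_sub]
      exact ih (t + 1) mB mG
    rw [hsum, Vdual, Vdual]
    refine (abs_max_sub_max_le_max _ _ _ _).trans (max_le ?_ ?_)
    · exact (ih (t + 1) nB nG).trans (le_add_of_nonneg_left (abs_nonneg _))
    · exact abs_sub_le_of_subconvex_step (by positivity) (by positivity)
        (posterior_weights_add_le_one nB nG) hS (ih_reward _ _ _) (ih_reward _ _ _)

theorem Vdual_lipschitz_in_multiplier_general (T : ℕ) (r : ℕ → Bool → ℝ) (lam lam' : ℕ → ℝ)
    (t : ℕ) (nB nG : ℕ) :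
    |Vdual r lam (T - t) t nB nG - Vdual r lam' (T - t) t nB nG| ≤
      ∑ s ∈ Finset.Ico t T, |lam s - lam' s| := by
  rcases le_or_gt t T with ht | ht
  · simpa [Nat.add_sub_cancel' ht] using abs_Vdual_sub_Vdual_le r lam lam' (T - t) t nB nG
  · simp [Nat.sub_eq_zero_of_le ht.le, Finset.Ico_eq_empty_of_le ht.le, Vdual]

/-- `V_t^a[λ]` is 1-Lipschitz in the ℓ¹ norm with respect to the
coordinates `(λ_t, …, λ_{T-1})` of the multiplier vector. -/
theorem Vdual_lipschitz_in_multiplier (T : ℕ) (r : ℕ → Bool → ℝ) (lam lam' : ℕ → ℝ)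
    (t : ℕ) (ht : t ≤ T) (nB nG : ℕ) (hB : 1 ≤ nB) (hG : 1 ≤ nG) :
    |Vdual r lam (T - t) t nB nG - Vdual r lam' (T - t) t nB nG| ≤
      ∑ s ∈ Finset.Ico t T, |lam s - lam' s| :=
  Vdual_lipschitz_in_multiplier_general T r lam lam' t nB nG
end
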